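/- Under the hypotheses of the previous statement (z², ζ² smooth with (z²_ξ)ᵀζ² = 0, (z²_x)ᵀζ² = ξ; ξ̂ smooth with ζ²(x, ξ̂(x;y,η)) = ζ¹(y,η); φ(x;y,η) = ⟨z²(x, ξ̂(x;y,η)) − z¹(y,η), ζ¹(y,η)⟩), assume in addition that the matrix ζ²_ξ(x, ξ̂(x;y,η)) is invertible for all (x;y,η) ∈ W. Then the mixed second-derivative matrix satisfies φ_{xη}(x;y,η) = (ζ²_ξ(x, ξ̂(x;y,η)))⁻¹ · ζ¹_η(y,η) for all (x;y,η) ∈ W. -/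

import Mathlib

open Matrix

/-- The continuous linear map `(u, v) ↦ A u + B v` on `ℝⁿ × ℝⁿ`; a map whose derivative at a
point has this form has Jacobian `A` in the first variable and `B` in the second. -/
noncomputable def jacCLM {n : ℕ} (A B : Matrix (Fin n) (Fin n) ℝ) :
    ((Fin n → ℝ) × (Fin n → ℝ)) →L[ℝ] (Fin n → ℝ) :=
  LinearMap.toContinuousLinearMap
    (A.mulVecLin.comp (LinearMap.fst ℝ (Fin n → ℝ) (Fin n → ℝ)) +
      B.mulVecLin.comp (LinearMap.snd ℝ (Fin n → ℝ) (Fin n → ℝ)))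

/-!
Differentiating `φ` in `x`, the relations `(z²_ξ)ᵀ ζ² = 0` and `(z²_x)ᵀ ζ² = ξ` cancel every term
except `ξ̂`, so `φ_x = ξ̂` on `W` and hence `φ_{xη} = ξ̂_η`. Differentiating the identity
`ζ²(x, ξ̂(x;y,η)) = ζ¹(y,η)` in `η` gives `ζ²_ξ · ξ̂_η = ζ¹_η`, which is inverted.
-/

@[simp] lemma jacCLM_apply {n : ℕ} (A B : Matrix (Fin n) (Fin n) ℝ) (u v : Fin n → ℝ) :
    jacCLM A B (u, v) = A *ᵥ u + B *ᵥ v := rfl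

open Filter Topology

theorem fderiv_dotProduct_apply {𝕜 ι E : Type*} [NontriviallyNormedField 𝕜] [Fintype ι]
    [NormedAddCommGroup E] [NormedSpace 𝕜 E] {f g : E → ι → 𝕜} {x : E}
    (hf : DifferentiableAt 𝕜 f x) (hg : DifferentiableAt 𝕜 g x) (v : E) :
    fderiv 𝕜 (fun y => f y ⬝ᵥ g y) x v = fderiv 𝕜 f x v ⬝ᵥ g x + f x ⬝ᵥ fderiv 𝕜 g x v := by
  have hfk : ∀ k, DifferentiableAt 𝕜 (fun y => f y k) x := fun k => differentiableAt_pi.1 hf k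
  have hgk : ∀ k, DifferentiableAt 𝕜 (fun y => g y k) x := fun k => differentiableAt_pi.1 hg k
  simp only [dotProduct]
  rw [fderiv_fun_sum (u := Finset.univ) (A := fun k y => f y k * g y k)
    fun k _ => (hfk k).mul (hgk k)]
  simp only [FunLike.coe_sum, Finset.sum_apply, fderiv_fun_mul (hfk _) (hgk _),
    fderiv_apply hf, fderiv_apply hg, ← Finset.sum_add_distrib]
  refine Finset.sum_congr rfl fun k _ => ?_
  simp only [_root_.add_apply, _root_.smul_apply,
    ContinuousLinearMap.comp_apply, ContinuousLinearMap.proj_apply, smul_eq_mul]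
  ring

section Graph

variable {X Y E F : Type*} [NormedAddCommGroup X] [NormedSpace ℝ X] [NormedAddCommGroup Y]
  [NormedSpace ℝ Y] [NormedAddCommGroup E] [NormedSpace ℝ E] [NormedAddCommGroup F]
  [NormedSpace ℝ F]

theorem HasFDerivAt.comp_graph {ξ : X × E → Y} {h : X × Y → F} {L : X × Y →L[ℝ] F} {r : X × E}
    (hh : HasFDerivAt h L (r.1, ξ r)) (hξ : DifferentiableAt ℝ ξ r) :
    HasFDerivAt (fun r => h (r.1, ξ r))
      (L.comp ((ContinuousLinearMap.fst ℝ X E).prod (fderiv ℝ ξ r))) r :=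
  hh.comp r (hasFDerivAt_fst.prodMk hξ.hasFDerivAt)

end Graph

section Phase

variable {n : ℕ} {E : Type*} [NormedAddCommGroup E] [NormedSpace ℝ E]
  {ξ : (Fin n → ℝ) × E → Fin n → ℝ}

theorem fderiv_phase_apply_inl {z2 : (Fin n → ℝ) × (Fin n → ℝ) → Fin n → ℝ}
    {z1 ζ : E → Fin n → ℝ} {A B : Matrix (Fin n) (Fin n) ℝ} {r : (Fin n → ℝ) × E}
    (hz2 : HasFDerivAt z2 (jacCLM A B) (r.1, ξ r)) (hA : Aᵀ *ᵥ ζ r.2 = ξ r)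
    (hB : Bᵀ *ᵥ ζ r.2 = 0) (hξ : DifferentiableAt ℝ ξ r) (hz1 : DifferentiableAt ℝ z1 r.2)
    (hζ : DifferentiableAt ℝ ζ r.2) (u : Fin n → ℝ) :
    fderiv ℝ (fun r => (z2 (r.1, ξ r) - z1 r.2) ⬝ᵥ ζ r.2) r (u, 0) = ξ r ⬝ᵥ u := by
  have hz2ξ := hz2.comp_graph hξ
  have hz1' : HasFDerivAt (fun r : (Fin n → ℝ) × E => z1 r.2)
      ((fderiv ℝ z1 r.2).comp (ContinuousLinearMap.snd ℝ _ _)) r :=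
    hz1.hasFDerivAt.comp r hasFDerivAt_snd
  have hζ' : HasFDerivAt (fun r : (Fin n → ℝ) × E => ζ r.2)
      ((fderiv ℝ ζ r.2).comp (ContinuousLinearMap.snd ℝ _ _)) r :=
    hζ.hasFDerivAt.comp r hasFDerivAt_snd
  rw [fderiv_dotProduct_apply (hz2ξ.fun_sub hz1').differentiableAt hζ'.differentiableAt,
    (hz2ξ.fun_sub hz1').fderiv, hζ'.fderiv]
  simp only [_root_.sub_apply, ContinuousLinearMap.comp_apply, ContinuousLinearMap.prod_apply,
    ContinuousLinearMap.coe_fst', ContinuousLinearMap.coe_snd', map_zero, jacCLM_apply, sub_zero,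
    dotProduct_zero, add_zero]
  rw [add_dotProduct, dotProduct_comm (A *ᵥ u), dotProduct_comm (B *ᵥ _), dotProduct_mulVec,
    dotProduct_mulVec, ← mulVec_transpose, ← mulVec_transpose, hA, hB, zero_dotProduct, add_zero]

theorem fderiv_apply_inr_eq_inv_mulVec_of_eventuallyEq
    {ζ2 : (Fin n → ℝ) × (Fin n → ℝ) → Fin n → ℝ} {ζ1 : E → Fin n → ℝ}
    {C D : Matrix (Fin n) (Fin n) ℝ} {L : E →L[ℝ] Fin n → ℝ}
    {q : (Fin n → ℝ) × E} (hζ2 : HasFDerivAt ζ2 (jacCLM C D) (q.1, ξ q))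
    (hζ1 : HasFDerivAt ζ1 L q.2) (hξ : DifferentiableAt ℝ ξ q)
    (heq : (fun r => ζ2 (r.1, ξ r)) =ᶠ[𝓝 q] fun r => ζ1 r.2) (hD : IsUnit D) (e : E) :
    fderiv ℝ ξ q (0, e) = D⁻¹ *ᵥ L e := by
  have hderiv := ((hζ2.comp_graph hξ).congr_of_eventuallyEq heq.symm).unique
    (hζ1.comp q hasFDerivAt_snd)
  have hderiv_inr := congrArg (fun M => M (0, e)) hderiv
  simp only [ContinuousLinearMap.comp_apply, ContinuousLinearMap.prod_apply,
    ContinuousLinearMap.coe_fst', ContinuousLinearMap.coe_snd', jacCLM_apply, mulVec_zero,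
    zero_add] at hderiv_inr
  let := hD.invertible
  exact (inv_mulVec_eq_vec hderiv_inr.symm).symm

end Phase

theorem composition_phase_mixed_derivative_general (n : ℕ)
    (V U : Set ((Fin n → ℝ) × (Fin n → ℝ))) (hUopen : IsOpen U)
    (z2 ζ2 : (Fin n → ℝ) × (Fin n → ℝ) → Fin n → ℝ)
    (Z2x Z2ξ W2x W2ξ : (Fin n → ℝ) × (Fin n → ℝ) → Matrix (Fin n) (Fin n) ℝ)
    (hdz2 : ∀ p ∈ V, HasFDerivAt z2 (jacCLM (Z2x p) (Z2ξ p)) p)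
    (hdζ2 : ∀ p ∈ V, HasFDerivAt ζ2 (jacCLM (W2x p) (W2ξ p)) p)
    (hrel1 : ∀ p ∈ V, (Z2ξ p)ᵀ *ᵥ ζ2 p = 0)
    (hrel2 : ∀ p ∈ V, (Z2x p)ᵀ *ᵥ ζ2 p = p.2)
    (z1 ζ1 : (Fin n → ℝ) × (Fin n → ℝ) → Fin n → ℝ)
    (hz1 : ContDiffOn ℝ (⊤ : ℕ∞) z1 U)
    (W1y W1η : (Fin n → ℝ) × (Fin n → ℝ) → Matrix (Fin n) (Fin n) ℝ)
    (hdζ1 : ∀ p ∈ U, HasFDerivAt ζ1 (jacCLM (W1y p) (W1η p)) p)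
    (W : Set ((Fin n → ℝ) × ((Fin n → ℝ) × (Fin n → ℝ)))) (hWopen : IsOpen W)
    (hWU : ∀ q ∈ W, q.2 ∈ U)
    (ξhat : (Fin n → ℝ) × ((Fin n → ℝ) × (Fin n → ℝ)) → Fin n → ℝ)
    (hξhat : ContDiffOn ℝ (⊤ : ℕ∞) ξhat W)
    (hmemV : ∀ q ∈ W, (q.1, ξhat q) ∈ V)
    (hζeq : ∀ q ∈ W, ζ2 (q.1, ξhat q) = ζ1 q.2)
    (φ : (Fin n → ℝ) × ((Fin n → ℝ) × (Fin n → ℝ)) → ℝ)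
    (hφdef : ∀ q, φ q = (z2 (q.1, ξhat q) - z1 q.2) ⬝ᵥ ζ1 q.2)
    (hinv : ∀ q ∈ W, IsUnit (W2ξ (q.1, ξhat q))) :
    ∀ q ∈ W, ∀ i j : Fin n,
      fderiv ℝ (fun r => fderiv ℝ φ r (Pi.single i 1, 0, 0)) q (0, 0, Pi.single j 1) =
        ((W2ξ (q.1, ξhat q))⁻¹ * W1η q.2) i j := by
  intro q hq i j
  have hξ : ∀ r ∈ W, DifferentiableAt ℝ ξhat r := fun r hr =>
    (hξhat.contDiffAt (hWopen.mem_nhds hr)).differentiableAt (by simp)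
  have hφx : ∀ r ∈ W, fderiv ℝ φ r (Pi.single i 1, 0, 0) = ξhat r i := by
    intro r hr
    have hV := hmemV r hr
    rw [show φ = _ from funext hφdef, Prod.mk_zero_zero,
      fderiv_phase_apply_inl (hdz2 _ hV) (hζeq r hr ▸ hrel2 _ hV) (hζeq r hr ▸ hrel1 _ hV)
        (hξ r hr) ((hz1.contDiffAt (hUopen.mem_nhds (hWU r hr))).differentiableAt (by simp))
        (hdζ1 _ (hWU r hr)).differentiableAt,
      dotProduct_single, mul_one]
  have hξη := fderiv_apply_inr_eq_inv_mulVec_of_eventuallyEq (hdζ2 _ (hmemV q hq))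
    (hdζ1 _ (hWU q hq)) (hξ q hq)
    (eventuallyEq_of_mem (hWopen.mem_nhds hq) hζeq) (hinv q hq) (0, Pi.single j 1)
  rw [(eventuallyEq_of_mem (hWopen.mem_nhds hq) hφx).fderiv_eq, fderiv_apply (hξ q hq)]
  simp only [ContinuousLinearMap.comp_apply, ContinuousLinearMap.proj_apply, hξη, jacCLM_apply,
    mulVec_zero, zero_add]
  rw [mulVec_mulVec, mulVec_single_one, col_apply]

/-- Under the hypotheses of Statement 10, if moreover `ζ²_ξ(x, ξ̂(x;y,η))`
is invertible on `W`, then the phase `φ(x;y,η) = ⟨z²(x, ξ̂(x;y,η)) − z¹(y,η), ζ¹(y,η)⟩` of the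
composition satisfies `φ_{xη}(x;y,η) = (ζ²_ξ(x, ξ̂(x;y,η)))⁻¹ · ζ¹_η(y,η)` on `W`. -/
theorem composition_phase_mixed_derivative (n : ℕ)
    (V U : Set ((Fin n → ℝ) × (Fin n → ℝ))) (hVopen : IsOpen V) (hUopen : IsOpen U)
    (z2 ζ2 : (Fin n → ℝ) × (Fin n → ℝ) → Fin n → ℝ)
    (hz2 : ContDiffOn ℝ (⊤ : ℕ∞) z2 V) (hζ2 : ContDiffOn ℝ (⊤ : ℕ∞) ζ2 V)
    (Z2x Z2ξ W2x W2ξ : (Fin n → ℝ) × (Fin n → ℝ) → Matrix (Fin n) (Fin n) ℝ)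
    (hdz2 : ∀ p ∈ V, HasFDerivAt z2 (jacCLM (Z2x p) (Z2ξ p)) p)
    (hdζ2 : ∀ p ∈ V, HasFDerivAt ζ2 (jacCLM (W2x p) (W2ξ p)) p)
    (hrel1 : ∀ p ∈ V, (Z2ξ p)ᵀ *ᵥ ζ2 p = 0)
    (hrel2 : ∀ p ∈ V, (Z2x p)ᵀ *ᵥ ζ2 p = p.2)
    (z1 ζ1 : (Fin n → ℝ) × (Fin n → ℝ) → Fin n → ℝ)
    (hz1 : ContDiffOn ℝ (⊤ : ℕ∞) z1 U) (hζ1 : ContDiffOn ℝ (⊤ : ℕ∞) ζ1 U)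
    (W1y W1η : (Fin n → ℝ) × (Fin n → ℝ) → Matrix (Fin n) (Fin n) ℝ)
    (hdζ1 : ∀ p ∈ U, HasFDerivAt ζ1 (jacCLM (W1y p) (W1η p)) p)
    (W : Set ((Fin n → ℝ) × ((Fin n → ℝ) × (Fin n → ℝ)))) (hWopen : IsOpen W)
    (hWU : ∀ q ∈ W, q.2 ∈ U)
    (ξhat : (Fin n → ℝ) × ((Fin n → ℝ) × (Fin n → ℝ)) → Fin n → ℝ)
    (hξhat : ContDiffOn ℝ (⊤ : ℕ∞) ξhat W)
    (hmemV : ∀ q ∈ W, (q.1, ξhat q) ∈ V)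
    (hζeq : ∀ q ∈ W, ζ2 (q.1, ξhat q) = ζ1 q.2)
    (φ : (Fin n → ℝ) × ((Fin n → ℝ) × (Fin n → ℝ)) → ℝ)
    (hφdef : ∀ q, φ q = (z2 (q.1, ξhat q) - z1 q.2) ⬝ᵥ ζ1 q.2)
    (hinv : ∀ q ∈ W, IsUnit (W2ξ (q.1, ξhat q))) :
    ∀ q ∈ W, ∀ i j : Fin n,
      fderiv ℝ (fun r => fderiv ℝ φ r (Pi.single i 1, 0, 0)) q (0, 0, Pi.single j 1) =
        ((W2ξ (q.1, ξhat q))⁻¹ * W1η q.2) i j :=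
  composition_phase_mixed_derivative_general n V U hUopen z2 ζ2 Z2x Z2ξ W2x W2ξ hdz2 hdζ2 hrel1
    hrel2 z1 ζ1 hz1 W1y W1η hdζ1 W hWopen hWU ξhat hξhat hmemV hζeq φ hφdef hinv
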